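/- Let X and Y be p×q real matrices such that every row of X has Euclidean norm at most γ and for every i ≤ p the Euclidean norm of the i-th row of X − Y is at most δ. Then for every i ≤ p, the Euclidean norm of the i-th row of X·Xᵀ − Y·Yᵀ is at most √p · (δ² + 2γδ). -/

import Mathlib

/-!
Entrywise, `(X Xᵀ - Y Yᵀ)ᵢⱼ = ⟪xᵢ, xⱼ - yⱼ⟫ + ⟪xᵢ - yᵢ, yⱼ⟫` for the rows `xᵢ`, `yᵢ`. Since
`‖yⱼ‖ ≤ γ + δ`, Cauchy–Schwarz bounds every entry by `γδ + δ(γ + δ) = δ² + 2γδ`, and a row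
with `p` entries of absolute value at most `c` has Euclidean norm at most `√p · c`.
-/

open RealInnerProductSpace Matrix WithLp

lemma abs_inner_sub_inner_le {E : Type*} [NormedAddCommGroup E] [InnerProductSpace ℝ E]
    {x x' y y' : E} {γ δ : ℝ} (hx : ‖x‖ ≤ γ) (hx' : ‖x'‖ ≤ γ) (hxy : ‖x - y‖ ≤ δ)
    (hxy' : ‖x' - y'‖ ≤ δ) :
    |⟪x, x'⟫ - ⟪y, y'⟫| ≤ δ ^ 2 + 2 * γ * δ := by
  have hγ : 0 ≤ γ := (norm_nonneg _).trans hx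
  have hδ : 0 ≤ δ := (norm_nonneg _).trans hxy
  have hy' : ‖y'‖ ≤ γ + δ := by
    calc ‖y'‖ = ‖x' - (x' - y')‖ := by rw [sub_sub_cancel]
      _ ≤ ‖x'‖ + ‖x' - y'‖ := norm_sub_le _ _
      _ ≤ γ + δ := add_le_add hx' hxy'
  have hsplit : ⟪x, x'⟫ - ⟪y, y'⟫ = ⟪x, x' - y'⟫ + ⟪x - y, y'⟫ := by
    rw [inner_sub_right, inner_sub_left]; ring
  calc |⟪x, x'⟫ - ⟪y, y'⟫| ≤ |⟪x, x' - y'⟫| + |⟪x - y, y'⟫| := hsplit ▸ abs_add_le _ _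
    _ ≤ ‖x‖ * ‖x' - y'‖ + ‖x - y‖ * ‖y'‖ :=
        add_le_add (abs_real_inner_le_norm _ _) (abs_real_inner_le_norm _ _)
    _ ≤ γ * δ + δ * (γ + δ) := by gcongr
    _ = δ ^ 2 + 2 * γ * δ := by ring

lemma sqrt_sum_sq_le_sqrt_card_mul {ι : Type*} [Fintype ι] (v : ι → ℝ) {c : ℝ} (hc : 0 ≤ c)
    (hv : ∀ j, |v j| ≤ c) :
    √(∑ j, v j ^ 2) ≤ √(Fintype.card ι) * c := by
  rw [← Real.sqrt_sq hc, ← Real.sqrt_mul (Nat.cast_nonneg _)]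
  gcongr
  calc ∑ j, v j ^ 2 ≤ ∑ _j : ι, c ^ 2 :=
        Finset.sum_le_sum fun j _ => sq_abs (v j) ▸ pow_le_pow_left₀ (abs_nonneg _) (hv j) 2
    _ = Fintype.card ι * c ^ 2 := by simp

lemma EuclideanSpace.norm_toLp_real {ι : Type*} [Fintype ι] (v : ι → ℝ) :
    ‖toLp 2 v‖ = √(∑ t, v t ^ 2) := by
  simp only [EuclideanSpace.norm_eq, Real.norm_eq_abs, sq_abs]

/-- Row-wise Gram-matrix perturbation bound: if every row of `X` has Euclidean
norm at most `γ` and every row of `X - Y` has Euclidean norm at most `δ`, then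
every row of `X·Xᵀ - Y·Yᵀ` has Euclidean norm at most `√p (δ² + 2γδ)`. -/
theorem stmt_1 {p q : ℕ} (X Y : Matrix (Fin p) (Fin q) ℝ) (γ δ : ℝ)
    (hγ : ∀ i, Real.sqrt (∑ t, (X i t) ^ 2) ≤ γ)
    (hδ : ∀ i, Real.sqrt (∑ t, (X i t - Y i t) ^ 2) ≤ δ) :
    ∀ i, Real.sqrt (∑ j, ((X * X.transpose - Y * Y.transpose) i j) ^ 2) ≤
      Real.sqrt p * (δ ^ 2 + 2 * γ * δ) := by
  intro i
  have hγ0 : 0 ≤ γ := (Real.sqrt_nonneg _).trans (hγ i)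
  have hδ0 : 0 ≤ δ := (Real.sqrt_nonneg _).trans (hδ i)
  have hnormX : ∀ k, ‖toLp 2 (X k)‖ ≤ γ := fun k => by
    simpa only [EuclideanSpace.norm_toLp_real] using hγ k
  have hnormXY : ∀ k, ‖toLp 2 (X k) - toLp 2 (Y k)‖ ≤ δ := fun k => by
    simpa only [← toLp_sub, EuclideanSpace.norm_toLp_real, Pi.sub_apply] using hδ k
  have hentry : ∀ j, |(X * Xᵀ - Y * Yᵀ) i j| ≤ δ ^ 2 + 2 * γ * δ := fun j => by
    rw [Matrix.sub_apply, ← conjTranspose_eq_transpose_of_trivial,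
      ← conjTranspose_eq_transpose_of_trivial, ← inner_matrix_row_row, ← inner_matrix_row_row]
    exact abs_inner_sub_inner_le (hnormX j) (hnormX i) (hnormXY j) (hnormXY i)
  simpa only [Fintype.card_fin] using
    sqrt_sum_sq_le_sqrt_card_mul _ (by positivity) hentry
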